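/- The function s ↦ h₃(s) + 2^{s+1}·81^{-s}/(1 − 2·9^{-s}), where h₃ is entire, has pole set exactly {log_9 2 + 2πim/log 9 : m ∈ ℤ}; in particular this set is disjoint from {log_3 2 + 2πim/log 3 : m ∈ ℤ}. -/

import Mathlib

/-!
The numerator `2^(s+1) 81^(-s)` never vanishes and the denominator `1 - 2 * 9^(-s)` is entire and
not identically zero, so the quotient fails to be analytic exactly at the zeros of the
denominator, i.e. where `9^s = 2`. All these points have real part `log 2 / log 9`, which is half
of `log 2 / log 3`.
-/

open Complex Filter Topology Set

section Analytic

variable {𝕜 : Type*} [NontriviallyNormedField 𝕜]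

theorem analyticAt_add_iff_right {E F : Type*} [NormedAddCommGroup E] [NormedSpace 𝕜 E]
    [NormedAddCommGroup F] [NormedSpace 𝕜 F] {f g : E → F} {s : E} (hf : AnalyticAt 𝕜 f s) :
    AnalyticAt 𝕜 (fun z => f z + g z) s ↔ AnalyticAt 𝕜 g s :=
  ⟨fun h => by convert h.sub hf using 1; ext; simp, hf.add⟩

theorem not_continuousAt_div_of_eq_zero {f g : 𝕜 → 𝕜} {s : 𝕜} (hf : ContinuousAt f s)
    (hg : ContinuousAt g s) (hfs : f s ≠ 0) (hgs : g s = 0) (hg_ne : ∀ᶠ z in 𝓝[≠] s, g z ≠ 0) :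
    ¬ ContinuousAt (fun z => f z / g z) s := by
  intro hfg
  have h_mul : Tendsto (fun z => f z / g z * g z) (𝓝[≠] s) (𝓝 (f s / g s * g s)) :=
    (hfg.mul hg).continuousWithinAt
  have h_eq : (fun z => f z / g z * g z) =ᶠ[𝓝[≠] s] f :=
    hg_ne.mono fun z hz => div_mul_cancel₀ _ hz
  have := tendsto_nhds_unique (h_mul.congr' h_eq) hf.continuousWithinAt
  rw [hgs, mul_zero] at this
  exact hfs this.symm

theorem analyticAt_div_iff {f g : 𝕜 → 𝕜} {s : 𝕜} (hf : AnalyticAt 𝕜 f s)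
    (hg : AnalyticAt 𝕜 g s) (hfs : f s ≠ 0) (hg_ne : ∀ᶠ z in 𝓝[≠] s, g z ≠ 0) :
    AnalyticAt 𝕜 (fun z => f z / g z) s ↔ g s ≠ 0 :=
  ⟨fun h hgs => not_continuousAt_div_of_eq_zero hf.continuousAt hg.continuousAt hfs hgs hg_ne
    h.continuousAt, hf.div hg⟩

end Analytic

theorem Differentiable.eventually_nhdsNE_ne_zero {E : Type*} [NormedAddCommGroup E]
    [NormedSpace ℂ E] [CompleteSpace E] {f : ℂ → E} (hf : Differentiable ℂ f) {z₀ : ℂ}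
    (hz₀ : f z₀ ≠ 0) (s : ℂ) : ∀ᶠ z in 𝓝[≠] s, f z ≠ 0 :=
  (hf.analyticAt s).eventually_eq_zero_or_eventually_ne_zero.resolve_left fun h =>
    hz₀ <| (hf.differentiableOn.analyticOnNhd isOpen_univ)
      |>.eqOn_zero_of_preconnected_of_eventuallyEq_zero isPreconnected_univ (mem_univ s) h
      (mem_univ z₀)

theorem Complex.ofReal_cpow_eq_ofReal_iff {a b : ℝ} (ha : 0 < a) (hb₀ : 0 < b) (hb₁ : b ≠ 1)
    (s : ℂ) : (b : ℂ) ^ s = a ↔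
      ∃ m : ℤ, s = Real.log a / Real.log b + 2 * Real.pi * I * m / Real.log b := by
  have hlog : (Real.log b : ℂ) ≠ 0 :=
    ofReal_ne_zero.mpr (Real.log_ne_zero_of_pos_of_ne_one hb₀ hb₁)
  rw [cpow_def_of_ne_zero (ofReal_ne_zero.mpr hb₀.ne'), ← ofReal_log hb₀.le,
    ← Real.exp_log ha, ofReal_exp, exp_eq_exp_iff_exists_int, Real.log_exp]
  refine exists_congr fun m => ?_
  rw [← add_div, eq_div_iff hlog]
  constructor <;> intro h <;> linear_combination h

theorem Complex.re_ofReal_div_add_two_pi_I_mul_div (u v : ℝ) (m : ℤ) :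
    ((u : ℂ) / v + 2 * Real.pi * I * m / v).re = u / v := by
  rcases eq_or_ne v 0 with rfl | hv
  · simp
  · simp [div_re, mul_div_mul_right _ _ hv]

theorem one_sub_two_mul_nine_cpow_neg_eq_zero_iff (s : ℂ) :
    1 - 2 * (9 : ℂ) ^ (-s) = 0 ↔
      ∃ m : ℤ, s = Real.log 2 / Real.log 9 + 2 * Real.pi * I * m / Real.log 9 := by
  have h9 : (9 : ℂ) ^ s ≠ 0 := by simp [cpow_eq_zero_iff]
  rw [← ofReal_cpow_eq_ofReal_iff two_pos (by norm_num) (by norm_num), cpow_neg, sub_eq_zero,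
    eq_comm, mul_inv_eq_one₀ h9, eq_comm]
  norm_num

/-- For any entire `h₃`, the pole set of
`s ↦ h₃(s) + 2^{s+1}·81^{-s}/(1 − 2·9^{-s})` is exactly
`{log₉ 2 + 2πim/log 9 : m ∈ ℤ}`; in particular it is disjoint from
`{log₃ 2 + 2πim/log 3 : m ∈ ℤ}`. -/
theorem topological_zeta_poles_omega3 (h₃ : ℂ → ℂ) (hh₃ : Differentiable ℂ h₃) :
    ({s : ℂ | ¬ AnalyticAt ℂ
        (fun z : ℂ => h₃ z + (2 : ℂ) ^ (z + 1) * (81 : ℂ) ^ (-z)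
          / (1 - 2 * (9 : ℂ) ^ (-z))) s}
      = {s : ℂ | ∃ m : ℤ, s = Real.log 2 / Real.log 9
          + 2 * Real.pi * Complex.I * m / Real.log 9}) ∧
    Disjoint
      {s : ℂ | ∃ m : ℤ, s = Real.log 2 / Real.log 9
          + 2 * Real.pi * Complex.I * m / Real.log 9}
      {s : ℂ | ∃ m : ℤ, s = Real.log 2 / Real.log 3
          + 2 * Real.pi * Complex.I * m / Real.log 3} := by
  have hN : Differentiable ℂ fun z : ℂ => (2 : ℂ) ^ (z + 1) * (81 : ℂ) ^ (-z) := by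
    fun_prop (disch := norm_num)
  have hD : Differentiable ℂ fun z : ℂ => 1 - 2 * (9 : ℂ) ^ (-z) := by
    fun_prop (disch := norm_num)
  have hN_ne (z : ℂ) : (2 : ℂ) ^ (z + 1) * (81 : ℂ) ^ (-z) ≠ 0 := by
    simp [cpow_eq_zero_iff]
  have hD_ne : ∀ s : ℂ, ∀ᶠ z in 𝓝[≠] s, 1 - 2 * (9 : ℂ) ^ (-z) ≠ 0 :=
    hD.eventually_nhdsNE_ne_zero (z₀ := 0) (by norm_num)
  have h_re : Real.log 2 / Real.log 9 ≠ Real.log 2 / Real.log 3 := by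
    have hlog9 : Real.log 9 = 2 * Real.log 3 := by
      rw [show (9 : ℝ) = 3 ^ 2 by norm_num, Real.log_pow, Nat.cast_ofNat]
    rw [hlog9, mul_comm, ← div_div]
    exact (half_lt_self (div_pos (Real.log_pos one_lt_two) (Real.log_pos (by norm_num)))).ne
  refine ⟨?_, ?_⟩
  · ext s
    simp only [mem_ofPred_eq]
    rw [← one_sub_two_mul_nine_cpow_neg_eq_zero_iff,
      analyticAt_add_iff_right (hh₃.analyticAt s),
      analyticAt_div_iff (hN.analyticAt s) (hD.analyticAt s) (hN_ne s) (hD_ne s), not_not]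
  · rw [Set.disjoint_left]
    rintro s ⟨m, rfl⟩ ⟨k, hk⟩
    have hre := congrArg re hk
    rw [re_ofReal_div_add_two_pi_I_mul_div, re_ofReal_div_add_two_pi_I_mul_div] at hre
    exact h_re hre
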